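/- As L → ∞, L^{−d} Σ_{k ∈ ℤ^d ∖ {0}} g_k^{(L)}/(1 − g_k^{(L)}) converges to ρ_c, and ρ_c < ∞. -/

import Mathlib

/-! With `ε = 2π/L`, the normalised lattice sum is `(2π)⁻ᵈ` times the Riemann sum
`εᵈ ∑_{k ≠ 0} F(εk)` of `F(p) = (e^{β|p|²} - 1)⁻¹`, and `F` is integrable on `ℝᵈ` for `d > 2`
because `F(p) ≤ |p|⁻² e^{-β|p|²/2} / β`. Over the lattice points with `|k| ≥ √d` the Riemann sum
is the integral of a step function which converges to `F` pointwise off the origin and, `F` being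
radially decreasing, is dominated by `F(p/2)`; dominated convergence applies. Each of the
finitely many remaining points contributes `εᵈ F(εk) ≤ ε^{d-2} / (β|k|²) → 0`. -/

open MeasureTheory Filter

noncomputable section

/-- the eigenvalue `g_k^{(L)} = exp(-β|2πk/L|²)` of the periodic heat operator. -/
def gk (d : ℕ) (β L : ℝ) (k : Fin d → ℤ) : ℝ :=
  Real.exp (-β * ∑ i, (2 * Real.pi * (k i : ℝ) / L) ^ 2)

/-- `a₁(p;1) = e^{-β|p|²}/(1 - e^{-β|p|²})`, whose integral over `ℝ^d` divided by
`(2π)^d` is the critical density `ρ_c`. -/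
def a1crit (d : ℕ) (β : ℝ) (p : EuclideanSpace ℝ (Fin d)) : ℝ :=
  Real.exp (-β * ‖p‖ ^ 2) / (1 - Real.exp (-β * ‖p‖ ^ 2))

open Set Topology

def boseEinstein (t : ℝ) : ℝ := (Real.exp t - 1)⁻¹

namespace boseEinstein

lemma exp_neg_div_one_sub_exp_neg (t : ℝ) :
    Real.exp (-t) / (1 - Real.exp (-t)) = boseEinstein t := by
  have h := (Real.exp_pos t).ne'
  rw [boseEinstein, Real.exp_neg, ← one_div, one_sub_div h, div_div_div_cancel_right₀ h, one_div]

lemma nonneg {t : ℝ} (ht : 0 ≤ t) : 0 ≤ boseEinstein t :=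
  inv_nonneg.2 (sub_nonneg.2 (Real.one_le_exp ht))

lemma antitoneOn : AntitoneOn boseEinstein (Ioi 0) := fun s hs t _ hst =>
  inv_anti₀ (sub_pos.2 (Real.one_lt_exp_iff.2 hs)) (by gcongr)

lemma continuousOn : ContinuousOn boseEinstein {0}ᶜ := by
  refine (Real.continuous_exp.continuousOn.sub continuousOn_const).inv₀ fun t ht => ?_
  simpa [sub_eq_zero] using ht

lemma le_inv {t : ℝ} (ht : 0 < t) : boseEinstein t ≤ t⁻¹ :=
  inv_anti₀ ht (by linarith [Real.add_one_le_exp t])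

lemma le_inv_mul_exp {t : ℝ} (ht : 0 < t) : boseEinstein t ≤ t⁻¹ * Real.exp (-(t / 2)) := by
  have hsinh : t / 2 ≤ Real.sinh (t / 2) := Real.self_le_sinh_iff.2 (by positivity)
  have key : t * Real.exp (t / 2) ≤ Real.exp t - 1 := by
    have : Real.exp t - 1 = 2 * Real.exp (t / 2) * Real.sinh (t / 2) := by
      rw [Real.sinh_eq, mul_comm 2, mul_assoc, mul_div_cancel₀ _ two_ne_zero, mul_sub,
        ← Real.exp_add, ← Real.exp_add, add_halves, add_neg_cancel, Real.exp_zero]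
    rw [this]
    nlinarith [Real.exp_pos (t / 2)]
  calc boseEinstein t ≤ (t * Real.exp (t / 2))⁻¹ := inv_anti₀ (by positivity) key
    _ = t⁻¹ * Real.exp (-(t / 2)) := by rw [mul_inv, Real.exp_neg]

end boseEinstein

lemma tendsto_pow_mul_boseEinstein_mul_sq {d : ℕ} (hd : 2 < d) {b : ℝ} (hb : 0 < b) :
    Tendsto (fun r => r ^ d * boseEinstein (b * r ^ 2)) (𝓝[>] 0) (𝓝 0) := by
  have hlim : Tendsto (fun r : ℝ => b⁻¹ * r ^ (d - 2)) (𝓝[>] 0) (𝓝 0) := by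
    have := ((by fun_prop : Continuous fun r : ℝ => b⁻¹ * r ^ (d - 2)).tendsto 0).mono_left
      (nhdsWithin_le_nhds (s := Ioi 0))
    simpa [zero_pow (show d - 2 ≠ 0 by omega)] using this
  refine squeeze_zero' ?_ ?_ hlim <;> filter_upwards [self_mem_nhdsWithin] with r (hr : 0 < r)
  · exact mul_nonneg (by positivity) (boseEinstein.nonneg (by positivity))
  · calc r ^ d * boseEinstein (b * r ^ 2) ≤ r ^ d * (b * r ^ 2)⁻¹ := by
          gcongr
          exact boseEinstein.le_inv (by positivity)
      _ = b⁻¹ * r ^ (d - 2) := by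
          rw [pow_sub₀ _ hr.ne' (by omega), mul_inv]
          ring

theorem integrable_boseEinstein_mul_norm_sq {E : Type*} [NormedAddCommGroup E] [NormedSpace ℝ E]
    [FiniteDimensional ℝ E] [MeasurableSpace E] [BorelSpace E] (μ : Measure E)
    [μ.IsAddHaarMeasure] (hE : 2 < Module.finrank ℝ E) {b : ℝ} (hb : 0 < b) :
    Integrable (fun x => boseEinstein (b * ‖x‖ ^ 2)) μ := by
  set n := Module.finrank ℝ E
  have : Nontrivial E := Module.nontrivial_of_finrank_pos (R := ℝ) (by omega)
  rw [integrable_fun_norm_addHaar μ (f := fun r => boseEinstein (b * r ^ 2))]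
  have hdom : IntegrableOn (fun y : ℝ => b⁻¹ * (y ^ ((n : ℝ) - 3) * Real.exp (-(b / 2) * y ^ 2)))
      (Ioi 0) :=
    (integrableOn_rpow_mul_exp_neg_mul_sq (by positivity) (by
      have : (3 : ℝ) ≤ n := by exact_mod_cast hE
      linarith)).const_mul _
  have hmeas : Measurable boseEinstein := (Real.measurable_exp.sub_const 1).inv
  refine hdom.mono' (by fun_prop) (ae_restrict_of_forall_mem measurableSet_Ioi fun y hy => ?_)
  have hy : 0 < y := hy
  have hpow : y ^ ((n : ℝ) - 3) = y ^ (n - 1) / y ^ 2 := by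
    rw [Real.rpow_sub hy, Real.rpow_natCast, pow_sub₀ _ hy.ne' (by omega)]
    norm_num
    ring
  rw [smul_eq_mul, norm_mul, Real.norm_of_nonneg (by positivity),
    Real.norm_of_nonneg (boseEinstein.nonneg (by positivity)), hpow]
  calc y ^ (n - 1) * boseEinstein (b * y ^ 2)
      ≤ y ^ (n - 1) * ((b * y ^ 2)⁻¹ * Real.exp (-(b * y ^ 2 / 2))) := by
        gcongr
        exact boseEinstein.le_inv_mul_exp (by positivity)
    _ = b⁻¹ * (y ^ (n - 1) / y ^ 2 * Real.exp (-(b / 2) * y ^ 2)) := by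
        rw [mul_inv]
        ring_nf

section Lattice

variable {d : ℕ}

def latticePoint (ε : ℝ) (k : Fin d → ℤ) : EuclideanSpace ℝ (Fin d) :=
  WithLp.toLp 2 fun i => ε * k i

@[simp]
lemma latticePoint_apply (ε : ℝ) (k : Fin d → ℤ) (i : Fin d) : latticePoint ε k i = ε * k i := rfl

def latticeFloor (ε : ℝ) (x : EuclideanSpace ℝ (Fin d)) : Fin d → ℤ :=
  fun i => ⌊x i / ε⌋

lemma norm_latticePoint {ε : ℝ} (hε : 0 ≤ ε) (k : Fin d → ℤ) :
    ‖latticePoint ε k‖ = ε * ‖latticePoint 1 k‖ := by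
  have : latticePoint ε k = ε • latticePoint 1 k := by
    ext i
    simp [latticePoint]
  rw [this, norm_smul, Real.norm_of_nonneg hε]

lemma norm_sub_latticePoint_latticeFloor_le {ε : ℝ} (hε : 0 < ε) (x : EuclideanSpace ℝ (Fin d)) :
    ‖x - latticePoint ε (latticeFloor ε x)‖ ≤ ε * √d := by
  have hcoord : ∀ i, ‖(x - latticePoint ε (latticeFloor ε x)) i‖ ^ 2 ≤ ε ^ 2 := fun i => by
    have hfract : (x - latticePoint ε (latticeFloor ε x)) i = ε * Int.fract (x i / ε) := by
      simp only [PiLp.sub_apply, latticePoint, latticeFloor]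
      rw [Int.fract, mul_sub, mul_div_cancel₀ _ hε.ne']
    rw [hfract, norm_mul, Real.norm_of_nonneg hε.le, Real.norm_of_nonneg (Int.fract_nonneg _)]
    gcongr
    exact mul_le_of_le_one_right hε.le (Int.fract_lt_one _).le
  calc ‖x - latticePoint ε (latticeFloor ε x)‖
      = √(∑ i, ‖(x - latticePoint ε (latticeFloor ε x)) i‖ ^ 2) := EuclideanSpace.norm_eq _
    _ ≤ √(d * ε ^ 2) := by
      gcongr
      simpa using Finset.sum_le_sum fun i (_ : i ∈ Finset.univ) => hcoord i
    _ = ε * √d := by rw [Real.sqrt_mul' _ (sq_nonneg ε), Real.sqrt_sq hε.le, mul_comm]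

lemma measurable_latticeFloor (ε : ℝ) : Measurable (latticeFloor (d := d) ε) :=
  measurable_pi_lambda _ fun _ => Int.measurable_floor.comp (by fun_prop)

lemma measurable_comp_latticeFloor {E : Type*} [MeasurableSpace E] (ε : ℝ)
    (c : (Fin d → ℤ) → E) : Measurable fun x => c (latticeFloor ε x) :=
  (measurable_of_countable c).comp (measurable_latticeFloor ε)

lemma latticeFloor_preimage_singleton {ε : ℝ} (hε : 0 < ε) (k : Fin d → ℤ) :
    latticeFloor ε ⁻¹' {k} =
      WithLp.ofLp ⁻¹' univ.pi fun i => Ico (ε * k i) (ε * k i + ε) := by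
  ext x
  simp only [mem_preimage, mem_singleton_iff, mem_univ_pi, mem_Ico, funext_iff, latticeFloor,
    Int.floor_eq_iff, le_div_iff₀ hε, div_lt_iff₀ hε, add_mul, one_mul, mul_comm ε]

lemma volume_latticeFloor_preimage_singleton {ε : ℝ} (hε : 0 < ε) (k : Fin d → ℤ) :
    volume (latticeFloor ε ⁻¹' {k}) = ENNReal.ofReal ε ^ d := by
  rw [latticeFloor_preimage_singleton hε, (PiLp.volume_preserving_ofLp (Fin d)).measure_preimage
    (MeasurableSet.univ_pi fun _ => measurableSet_Ico).nullMeasurableSet, volume_pi_pi]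
  simp

theorem hasSum_integral_comp_latticeFloor {ε : ℝ} (hε : 0 < ε) {c : (Fin d → ℤ) → ℝ}
    (hc : Integrable fun x => c (latticeFloor ε x)) :
    HasSum (fun k => ε ^ d * c k) (∫ x, c (latticeFloor ε x)) := by
  have hmeas (k : Fin d → ℤ) : MeasurableSet (latticeFloor ε ⁻¹' {k}) :=
    measurable_latticeFloor ε (measurableSet_singleton k)
  have hdisj : Pairwise (Function.onFun Disjoint fun k : Fin d → ℤ => latticeFloor ε ⁻¹' {k}) :=
    fun k l hkl => (disjoint_singleton.2 hkl).preimage _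
  have h := hasSum_integral_iUnion hmeas hdisj hc.integrableOn
  rw [← preimage_iUnion, iUnion_of_singleton, preimage_univ, Measure.restrict_univ] at h
  have hcell (k : Fin d → ℤ) :
      ∫ x in latticeFloor ε ⁻¹' {k}, c (latticeFloor ε x) = ε ^ d * c k := by
    rw [setIntegral_congr_fun (hmeas k) fun x (hx : latticeFloor ε x = k) => by rw [hx],
      setIntegral_const, measureReal_def, volume_latticeFloor_preimage_singleton hε,
      ENNReal.toReal_pow, ENNReal.toReal_ofReal hε.le, smul_eq_mul]
  simpa only [hcell] using h

/-- The cell of `k ∈ farLattice d` lies within distance `‖εk‖` of `εk`, which makes the step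
function dominated by `x ↦ g (‖x‖ / 2)`; the finitely many other points are summed separately. -/
def farLattice (d : ℕ) : Set (Fin d → ℤ) := {k | √d ≤ ‖latticePoint 1 k‖}

lemma latticePoint_zero_right (ε : ℝ) : latticePoint ε (0 : Fin d → ℤ) = 0 := by
  ext
  simp [latticePoint]

lemma ne_zero_of_mem_farLattice (hd : 0 < d) {k : Fin d → ℤ} (hk : k ∈ farLattice d) :
    k ≠ 0 := by
  rintro rfl
  have h0 : √d ≤ ‖latticePoint 1 (0 : Fin d → ℤ)‖ := hk
  rw [latticePoint_zero_right, norm_zero] at h0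
  exact h0.not_gt (Real.sqrt_pos.2 (Nat.cast_pos.2 hd))

lemma finite_compl_farLattice (d : ℕ) : (farLattice d)ᶜ.Finite := by
  refine (Finset.Icc (fun _ => -(d : ℤ)) fun _ => (d : ℤ)).finite_toSet.subset fun k hk => ?_
  have hsq (i : Fin d) : k i ^ 2 < d := by
    have : |(k i : ℝ)| < √d :=
      calc |(k i : ℝ)| = ‖latticePoint 1 k i‖ := by simp [latticePoint]
        _ ≤ ‖latticePoint 1 k‖ := PiLp.norm_apply_le _ _
        _ < √d := not_le.1 hk
    rw [Real.lt_sqrt (abs_nonneg _), sq_abs] at this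
    exact_mod_cast this
  simp only [Finset.coe_Icc, mem_Icc, Pi.le_def]
  exact ⟨fun i => by nlinarith [hsq i], fun i => by nlinarith [hsq i]⟩

section RadialRiemannSum

variable {g : ℝ → ℝ}

lemma norm_indicator_farLattice_latticeFloor_le (hg_nonneg : ∀ r, 0 < r → 0 ≤ g r)
    (hg_anti : AntitoneOn g (Ioi 0)) {ε : ℝ} (hε : 0 < ε) {x : EuclideanSpace ℝ (Fin d)}
    (hx : x ≠ 0) :
    ‖(farLattice d).indicator (fun k => g ‖latticePoint ε k‖) (latticeFloor ε x)‖ ≤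
      g ‖(2⁻¹ : ℝ) • x‖ := by
  have hx2 : 0 < ‖(2⁻¹ : ℝ) • x‖ := norm_pos_iff.2 (smul_ne_zero (by norm_num) hx)
  by_cases hk : latticeFloor ε x ∈ farLattice d
  · set p := latticePoint ε (latticeFloor ε x)
    have hcell : ‖x - p‖ ≤ ‖p‖ := by
      rw [norm_latticePoint hε.le]
      exact (norm_sub_latticePoint_latticeFloor_le hε x).trans
        (mul_le_mul_of_nonneg_left hk hε.le)
    have hxp : ‖(2⁻¹ : ℝ) • x‖ ≤ ‖p‖ := by
      rw [norm_smul, Real.norm_of_nonneg (by norm_num)]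
      linarith [norm_le_norm_add_norm_sub' x p]
    rw [indicator_of_mem hk, Real.norm_of_nonneg (hg_nonneg _ (hx2.trans_le hxp))]
    exact hg_anti hx2 (hx2.trans_le hxp) hxp
  · rw [indicator_of_notMem hk, norm_zero]
    exact hg_nonneg _ hx2

lemma integrable_indicator_farLattice_latticeFloor (hd : 0 < d)
    (hg_nonneg : ∀ r, 0 < r → 0 ≤ g r) (hg_anti : AntitoneOn g (Ioi 0))
    (hg_int : Integrable fun x : EuclideanSpace ℝ (Fin d) => g ‖x‖) {ε : ℝ} (hε : 0 < ε) :
    Integrable fun x : EuclideanSpace ℝ (Fin d) =>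
      (farLattice d).indicator (fun k => g ‖latticePoint ε k‖) (latticeFloor ε x) := by
  have : Nonempty (Fin d) := Fin.pos_iff_nonempty.1 hd
  refine (hg_int.comp_smul (R := 2⁻¹) (by norm_num)).mono'
    (measurable_comp_latticeFloor ε _).aestronglyMeasurable ?_
  filter_upwards [compl_mem_ae_iff.2 (measure_singleton 0)] with x hx
  exact norm_indicator_farLattice_latticeFloor_le hg_nonneg hg_anti hε hx

lemma tendsto_indicator_farLattice_latticeFloor (hg_cont : ContinuousOn g (Ioi 0))
    {x : EuclideanSpace ℝ (Fin d)} (hx : x ≠ 0) :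
    Tendsto (fun ε => (farLattice d).indicator (fun k => g ‖latticePoint ε k‖)
      (latticeFloor ε x)) (𝓝[>] 0) (𝓝 (g ‖x‖)) := by
  set p := fun ε => latticePoint ε (latticeFloor ε x)
  have hdiam : Tendsto (fun ε : ℝ => ε * √d) (𝓝[>] 0) (𝓝 0) := by
    simpa using ((continuous_mul_const (√d : ℝ)).tendsto 0).mono_left nhdsWithin_le_nhds
  have hp : Tendsto p (𝓝[>] 0) (𝓝 x) := by
    rw [tendsto_iff_norm_sub_tendsto_zero]
    refine squeeze_zero' (Eventually.of_forall fun _ => norm_nonneg _) ?_ hdiam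
    filter_upwards [self_mem_nhdsWithin] with ε hε
    rw [norm_sub_rev]
    exact norm_sub_latticePoint_latticeFloor_le hε x
  have hfar : ∀ᶠ ε in 𝓝[>] 0, latticeFloor ε x ∈ farLattice d := by
    filter_upwards [hdiam.eventually_lt hp.norm (norm_pos_iff.2 hx), self_mem_nhdsWithin]
      with ε hlt hε
    rw [norm_latticePoint (le_of_lt hε)] at hlt
    exact (lt_of_mul_lt_mul_left hlt (le_of_lt hε)).le
  refine ((hg_cont.continuousAt (Ioi_mem_nhds (norm_pos_iff.2 hx))).tendsto.comp
    hp.norm).congr' ?_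
  filter_upwards [hfar] with ε hε
  rw [Function.comp_apply, indicator_of_mem hε]

theorem tendsto_integral_indicator_farLattice_latticeFloor (hd : 0 < d)
    (hg_nonneg : ∀ r, 0 < r → 0 ≤ g r) (hg_anti : AntitoneOn g (Ioi 0))
    (hg_cont : ContinuousOn g (Ioi 0))
    (hg_int : Integrable fun x : EuclideanSpace ℝ (Fin d) => g ‖x‖) :
    Tendsto (fun ε => ∫ x : EuclideanSpace ℝ (Fin d),
        (farLattice d).indicator (fun k => g ‖latticePoint ε k‖) (latticeFloor ε x))
      (𝓝[>] 0) (𝓝 (∫ x : EuclideanSpace ℝ (Fin d), g ‖x‖)) := by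
  have : Nonempty (Fin d) := Fin.pos_iff_nonempty.1 hd
  have hx0 : ∀ᵐ x : EuclideanSpace ℝ (Fin d), x ≠ 0 := compl_mem_ae_iff.2 (measure_singleton 0)
  refine tendsto_integral_filter_of_dominated_convergence _
    (Eventually.of_forall fun ε => (measurable_comp_latticeFloor ε _).aestronglyMeasurable)
    ?_ (hg_int.comp_smul (R := 2⁻¹) (by norm_num)) ?_
  · filter_upwards [self_mem_nhdsWithin] with ε hε
    filter_upwards [hx0] with x hx
    exact norm_indicator_farLattice_latticeFloor_le hg_nonneg hg_anti hε hx
  · filter_upwards [hx0] with x hx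
    exact tendsto_indicator_farLattice_latticeFloor hg_cont hx

lemma tendsto_pow_mul_apply_norm_latticePoint
    (hg_zero : Tendsto (fun r => r ^ d * g r) (𝓝[>] 0) (𝓝 0)) {k : Fin d → ℤ} (hk : k ≠ 0) :
    Tendsto (fun ε => ε ^ d * g ‖latticePoint ε k‖) (𝓝[>] 0) (𝓝 0) := by
  set c := ‖latticePoint 1 k‖ with hc_def
  have hc : 0 < c := by
    obtain ⟨i, hi⟩ := Function.ne_iff.1 hk
    refine norm_pos_iff.2 fun h => hi ?_
    simpa [latticePoint] using congrArg (· i) h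
  have hscale : Tendsto (fun ε => ε * c) (𝓝[>] 0) (𝓝[>] 0) := by
    refine tendsto_nhdsWithin_iff.2 ⟨?_, ?_⟩
    · simpa using ((continuous_mul_const c).tendsto 0).mono_left nhdsWithin_le_nhds
    · filter_upwards [self_mem_nhdsWithin] with ε hε using mul_pos hε hc
  refine ((hg_zero.comp hscale).const_mul (c ^ d)⁻¹).congr' ?_ |>.trans (by simp)
  filter_upwards [self_mem_nhdsWithin] with ε hε
  rw [Function.comp_apply, norm_latticePoint (le_of_lt hε), ← hc_def, mul_pow]
  field_simp

theorem tendsto_pow_mul_tsum_latticePoint (hd : 0 < d)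
    (hg_nonneg : ∀ r, 0 < r → 0 ≤ g r) (hg_anti : AntitoneOn g (Ioi 0))
    (hg_cont : ContinuousOn g (Ioi 0))
    (hg_int : Integrable fun x : EuclideanSpace ℝ (Fin d) => g ‖x‖)
    (hg_zero : Tendsto (fun r => r ^ d * g r) (𝓝[>] 0) (𝓝 0)) :
    Tendsto (fun ε => ε ^ d * ∑' k : Fin d → ℤ, if k = 0 then 0 else g ‖latticePoint ε k‖)
      (𝓝[>] 0) (𝓝 (∫ x : EuclideanSpace ℝ (Fin d), g ‖x‖)) := by
  set a : ℝ → (Fin d → ℤ) → ℝ := fun ε k => if k = 0 then 0 else g ‖latticePoint ε k‖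
  set N := (finite_compl_farLattice d).toFinset
  have hnear : Tendsto (fun ε => ∑ k ∈ N, ε ^ d * a ε k) (𝓝[>] 0) (𝓝 0) := by
    rw [← Finset.sum_const_zero (s := N)]
    refine tendsto_finsetSum N fun k _ => ?_
    by_cases hk : k = 0
    · simp [a, hk]
    · simpa [a, hk] using tendsto_pow_mul_apply_norm_latticePoint hg_zero hk
  refine ((tendsto_integral_indicator_farLattice_latticeFloor hd hg_nonneg hg_anti hg_cont
    hg_int).add hnear).congr' ?_ |>.trans (by rw [add_zero])
  filter_upwards [self_mem_nhdsWithin] with ε hε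
  have hsplit (k : Fin d → ℤ) : ε ^ d * a ε k = ε ^ d * (farLattice d).indicator
      (fun k => g ‖latticePoint ε k‖) k + ε ^ d * (farLattice d)ᶜ.indicator (a ε) k := by
    by_cases hk : k ∈ farLattice d
    · simp [a, hk, ne_zero_of_mem_farLattice hd hk]
    · simp [hk]
  have hfar := hasSum_integral_comp_latticeFloor hε
    (integrable_indicator_farLattice_latticeFloor hd hg_nonneg hg_anti hg_int hε)
  have hnear' := hasSum_sum_of_ne_finset_zero (L := SummationFilter.unconditional _) (s := N)
    (f := fun k => ε ^ d * (farLattice d)ᶜ.indicator (a ε) k) fun k hk => by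
      rw [indicator_of_notMem (by simpa [N] using hk), mul_zero]
  have hN : ∑ k ∈ N, ε ^ d * (farLattice d)ᶜ.indicator (a ε) k = ∑ k ∈ N, ε ^ d * a ε k :=
    Finset.sum_congr rfl fun k hk => by rw [indicator_of_mem (by simpa [N] using hk)]
  rw [← hN, ← ((hfar.add hnear').congr_fun hsplit).tsum_eq, tsum_mul_left]

end RadialRiemannSum

end Lattice

theorem tendsto_pow_mul_tsum_boseEinstein_latticePoint {d : ℕ} (hd : 2 < d) {b : ℝ} (hb : 0 < b) :
    Tendsto (fun ε => ε ^ d * ∑' k : Fin d → ℤ,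
        if k = 0 then 0 else boseEinstein (b * ‖latticePoint ε k‖ ^ 2))
      (𝓝[>] 0) (𝓝 (∫ x : EuclideanSpace ℝ (Fin d), boseEinstein (b * ‖x‖ ^ 2))) := by
  refine tendsto_pow_mul_tsum_latticePoint (g := fun r => boseEinstein (b * r ^ 2)) (by omega)
    (fun r hr => boseEinstein.nonneg (by positivity))
    (fun r (hr : 0 < r) s (hs : 0 < s) hrs => boseEinstein.antitoneOn
      (mem_Ioi.2 (by positivity)) (mem_Ioi.2 (by positivity)) (by gcongr))
    (boseEinstein.continuousOn.comp (by fun_prop) fun r (hr : 0 < r) => by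
      simpa using (by positivity : 0 < b * r ^ 2).ne')
    (integrable_boseEinstein_mul_norm_sq volume (by simpa using hd) hb)
    (tendsto_pow_mul_boseEinstein_mul_sq hd hb)

lemma a1crit_eq_boseEinstein (d : ℕ) (β : ℝ) (p : EuclideanSpace ℝ (Fin d)) :
    a1crit d β p = boseEinstein (β * ‖p‖ ^ 2) := by
  rw [a1crit, neg_mul, boseEinstein.exp_neg_div_one_sub_exp_neg]

lemma gk_div_one_sub_gk (d : ℕ) (β L : ℝ) (k : Fin d → ℤ) :
    gk d β L k / (1 - gk d β L k) =
      boseEinstein (β * ‖latticePoint (2 * Real.pi / L) k‖ ^ 2) := by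
  simp only [gk, EuclideanSpace.real_norm_sq_eq, latticePoint_apply, neg_mul,
    boseEinstein.exp_neg_div_one_sub_exp_neg]
  congr 2
  exact Finset.sum_congr rfl fun i _ => by ring

/-- Lemma 4(iii): `ρ_c < ∞` (i.e. `a₁(⬝;1)` is integrable since `d > 2`) and
`L^{-d} Σ_{k≠0} g_k^{(L)}/(1-g_k^{(L)}) → ρ_c` as `L → ∞`. -/
theorem critical_density_limit (d : ℕ) (hd : 2 < d) (β : ℝ) (hβ : 0 < β) :
    Integrable (fun p : EuclideanSpace ℝ (Fin d) => a1crit d β p) ∧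
    Tendsto
      (fun L : ℝ =>
        (∑' k : Fin d → ℤ, if k = 0 then 0 else gk d β L k / (1 - gk d β L k)) / L ^ d)
      atTop
      (nhds ((∫ p : EuclideanSpace ℝ (Fin d), a1crit d β p) / (2 * Real.pi) ^ d)) := by
  simp_rw [a1crit_eq_boseEinstein]
  refine ⟨integrable_boseEinstein_mul_norm_sq volume (by simpa using hd) hβ, ?_⟩
  have hε : Tendsto (fun L : ℝ => 2 * Real.pi / L) atTop (𝓝[>] 0) :=
    tendsto_nhdsWithin_iff.2 ⟨tendsto_const_nhds.div_atTop tendsto_id,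
      (eventually_gt_atTop 0).mono fun L (hL : 0 < L) => mem_Ioi.2 (by positivity)⟩
  refine (((tendsto_pow_mul_tsum_boseEinstein_latticePoint hd hβ).comp hε).div_const
    ((2 * Real.pi) ^ d)).congr' ?_
  filter_upwards [eventually_gt_atTop 0] with L hL
  simp only [Function.comp_apply, gk_div_one_sub_gk]
  rw [div_pow]
  field_simp
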